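/- Let N ≥ 1 and r ≥ 1 be integers. In ℚ[x]⟦t⟧ let F_{r,N}(t,x) = F_N(t)^r · E(t), where F_N(t) ∈ ℚ⟦t⟧ ⊆ ℚ[x]⟦t⟧ is the unique power series with F_N(t)·(e^t − T_{N−1}(t)) = t^N/N!, and E(t) = ∑_{n≥0} x^n t^n/n!. Then t · ∂_t F_{r,N}(t,x) = rN·F_{r,N}(t,x) + (x − r)·t·F_{r,N}(t,x) − rN·F_{r+1,N}(t,x), where ∂_t denotes the formal derivative in t and F_{r+1,N}(t,x) = F_N(t)^{r+1}·E(t). -/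

import Mathlib

/-!
Let `θ = t·d/dt` and `G = e^t - T_{N-1}(t)`. Then `θ G = t G + N t^N/N! = t G + N F G`, while
`θ (F G) = N F G` because `F G` is a monomial of degree `N`. Comparing with Leibniz' rule and
cancelling `G` gives the Riccati equation `θ F = F (N - t - N F)`. Since `θ` is a derivation,
the factors `a` in `θ f = f a` add up over products, and `θ E = E x t`; hence
`θ (F^r E) = F^r E (r (N - t - N F) + x t)`, which is the claim.
-/

open PowerSeries

open scoped Nat

namespace PowerSeries

section CommSemiring

variable {R : Type*} [CommSemiring R]

theorem coeff_X_mul_derivative (f : R⟦X⟧) (n : ℕ) :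
    coeff n (X * d⁄dX R f) = n * coeff n f := by
  cases n with
  | zero => simp
  | succ n => rw [coeff_succ_X_mul, coeff_derivative, mul_comm]; push_cast; rfl

theorem X_mul_derivative_monomial (n : ℕ) (a : R) :
    X * d⁄dX R (monomial n a) = (n : R⟦X⟧) * monomial n a := by
  ext m
  rw [coeff_X_mul_derivative, ← map_natCast (C (R := R)), coeff_C_mul, coeff_monomial]
  split_ifs with h <;> simp [h]

theorem derivative_map {S : Type*} [CommSemiring S] (g : R →+* S) (f : R⟦X⟧) :
    d⁄dX S (map g f) = map g (d⁄dX R f) := by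
  ext n
  simp [coeff_derivative]

theorem X_mul_derivative_mul {f g a b : R⟦X⟧} (hf : X * d⁄dX R f = f * a)
    (hg : X * d⁄dX R g = g * b) : X * d⁄dX R (f * g) = f * g * (a + b) := by
  rw [Derivation.leibniz, smul_eq_mul, smul_eq_mul, mul_add, mul_left_comm X f,
    mul_left_comm X g, hf, hg]
  ring

theorem X_mul_derivative_pow {f a : R⟦X⟧} (hf : X * d⁄dX R f = f * a) (r : ℕ) :
    X * d⁄dX R (f ^ r) = f ^ r * ((r : R⟦X⟧) * a) := by
  induction r with
  | zero => simp
  | succ r ih =>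
    rw [pow_succ, X_mul_derivative_mul ih hf]
    push_cast
    ring

end CommSemiring

theorem X_mul_derivative_mk_smul_pow {A : Type*} [CommSemiring A] [Algebra ℚ A] (a : A) :
    X * d⁄dX A (mk fun m => (m ! : ℚ)⁻¹ • a ^ m)
      = (mk fun m => (m ! : ℚ)⁻¹ • a ^ m) * (C a * X) := by
  ext n
  rw [coeff_X_mul_derivative, mul_comm (mk _) (C a * X), mul_assoc, coeff_C_mul]
  cases n with
  | zero => simp
  | succ n =>
    rw [coeff_succ_X_mul, coeff_mk, coeff_mk, mul_smul_comm, mul_smul_comm, ← pow_succ' a,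
      ← nsmul_eq_mul, ← Nat.cast_smul_eq_nsmul ℚ, smul_smul, Nat.factorial_succ]
    congr 1
    push_cast
    field_simp

section Field

/-- `e^t - T_{N-1}(t)`. -/
noncomputable def expTail (K : Type*) [Field K] (N : ℕ) : K⟦X⟧ :=
  mk fun j => if N ≤ j then (j ! : K)⁻¹ else 0

variable {K : Type*} [Field K] [CharZero K]

theorem expTail_ne_zero (N : ℕ) : expTail K N ≠ 0 := by
  intro h
  simpa [expTail, Nat.factorial_ne_zero] using congrArg (coeff N) h

theorem X_mul_derivative_expTail (N : ℕ) :
    X * d⁄dX K (expTail K N) = X * expTail K N + (N : K⟦X⟧) * monomial N (N ! : K)⁻¹ := by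
  ext n
  rw [coeff_X_mul_derivative, map_add, ← map_natCast (C (R := K)), coeff_C_mul, coeff_monomial]
  cases n with
  | zero => rcases N with _ | N <;> simp [expTail]
  | succ m =>
    rw [coeff_succ_X_mul]
    simp only [expTail, coeff_mk]
    rcases lt_trichotomy (m + 1) N with h | rfl | h
    · simp [show ¬N ≤ m + 1 by omega, show ¬N ≤ m by omega, h.ne]
    · simp [Nat.factorial_succ]
    · rw [if_pos h.le, if_pos (by omega), if_neg h.ne', Nat.factorial_succ]
      push_cast
      field_simp
      ring

theorem X_mul_derivative_eq_of_mul_expTail {N : ℕ} {F : K⟦X⟧}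
    (hF : F * expTail K N = monomial N (N ! : K)⁻¹) :
    X * d⁄dX K F = F * ((N : K⟦X⟧) - X - (N : K⟦X⟧) * F) := by
  have h : X * d⁄dX K (F * expTail K N) = (N : K⟦X⟧) * (F * expTail K N) := by
    rw [hF, X_mul_derivative_monomial]
  rw [Derivation.leibniz, smul_eq_mul, smul_eq_mul] at h
  have hG := X_mul_derivative_expTail (K := K) N
  rw [← hF] at hG
  apply mul_right_cancel₀ (expTail_ne_zero (K := K) N)
  linear_combination h - F * hG

end Field

end PowerSeries

theorem higher_order_hypergeometric_egf_derivative_general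
    (N r : ℕ) (F : PowerSeries ℚ)
    (hF : F * (PowerSeries.mk fun j => if N ≤ j then ((j.factorial : ℚ))⁻¹ else 0)
        = PowerSeries.mk fun j => if j = N then ((N.factorial : ℚ))⁻¹ else 0) :
    PowerSeries.X *
        (d⁄dX (Polynomial ℚ)
          ((PowerSeries.map (Polynomial.C : ℚ →+* Polynomial ℚ) F) ^ r
            * PowerSeries.mk (fun m => ((m.factorial : ℚ))⁻¹ • (Polynomial.X : Polynomial ℚ) ^ m)))
      = ((r : ℚ) * (N : ℚ)) •
            ((PowerSeries.map (Polynomial.C : ℚ →+* Polynomial ℚ) F) ^ r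
              * PowerSeries.mk (fun m => ((m.factorial : ℚ))⁻¹ • (Polynomial.X : Polynomial ℚ) ^ m))
        + (PowerSeries.C (R := Polynomial ℚ) (Polynomial.X - Polynomial.C (r : ℚ)))
            * (PowerSeries.X *
                ((PowerSeries.map (Polynomial.C : ℚ →+* Polynomial ℚ) F) ^ r
                  * PowerSeries.mk (fun m => ((m.factorial : ℚ))⁻¹ • (Polynomial.X : Polynomial ℚ) ^ m)))
        - ((r : ℚ) * (N : ℚ)) •
            ((PowerSeries.map (Polynomial.C : ℚ →+* Polynomial ℚ) F) ^ (r + 1)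
              * PowerSeries.mk (fun m => ((m.factorial : ℚ))⁻¹ • (Polynomial.X : Polynomial ℚ) ^ m)) := by
  rw [← monomial_eq_mk] at hF
  have hA := congrArg (map (Polynomial.C : ℚ →+* Polynomial ℚ))
    (X_mul_derivative_eq_of_mul_expTail hF)
  rw [map_mul, map_mul, map_X, ← derivative_map] at hA
  rw [X_mul_derivative_mul (X_mul_derivative_pow hA r)
    (X_mul_derivative_mk_smul_pow (Polynomial.X : Polynomial ℚ))]
  simp only [Algebra.smul_def, map_mul, map_sub, map_natCast, map_X]
  ring

/-- Lemma 1(ii): in `ℚ[x]⟦t⟧`, with `F_{r,N}(t,x) = F_N(t)^r · e^{xt}` (the exponential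
generating function of the higher order hypergeometric Bernoulli polynomials, where
`F_N(t) ∈ ℚ⟦t⟧` is the unique power series with `F_N(t)·(e^t - T_{N-1}(t)) = t^N/N!`),
one has `t·∂ₜF_{r,N}(t,x) = rN·F_{r,N}(t,x) + (x - r)·t·F_{r,N}(t,x) - rN·F_{r+1,N}(t,x)`. -/
theorem higher_order_hypergeometric_egf_derivative
    (N r : ℕ) (hN : 1 ≤ N) (hr : 1 ≤ r) (F : PowerSeries ℚ)
    (hF : F * (PowerSeries.mk fun j => if N ≤ j then ((j.factorial : ℚ))⁻¹ else 0)
        = PowerSeries.mk fun j => if j = N then ((N.factorial : ℚ))⁻¹ else 0) :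
    PowerSeries.X *
        (d⁄dX (Polynomial ℚ)
          ((PowerSeries.map (Polynomial.C : ℚ →+* Polynomial ℚ) F) ^ r
            * PowerSeries.mk (fun m => ((m.factorial : ℚ))⁻¹ • (Polynomial.X : Polynomial ℚ) ^ m)))
      = ((r : ℚ) * (N : ℚ)) •
            ((PowerSeries.map (Polynomial.C : ℚ →+* Polynomial ℚ) F) ^ r
              * PowerSeries.mk (fun m => ((m.factorial : ℚ))⁻¹ • (Polynomial.X : Polynomial ℚ) ^ m))
        + (PowerSeries.C (R := Polynomial ℚ) (Polynomial.X - Polynomial.C (r : ℚ)))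
            * (PowerSeries.X *
                ((PowerSeries.map (Polynomial.C : ℚ →+* Polynomial ℚ) F) ^ r
                  * PowerSeries.mk (fun m => ((m.factorial : ℚ))⁻¹ • (Polynomial.X : Polynomial ℚ) ^ m)))
        - ((r : ℚ) * (N : ℚ)) •
            ((PowerSeries.map (Polynomial.C : ℚ →+* Polynomial ℚ) F) ^ (r + 1)
              * PowerSeries.mk (fun m => ((m.factorial : ℚ))⁻¹ • (Polynomial.X : Polynomial ℚ) ^ m)) :=
  higher_order_hypergeometric_egf_derivative_general N r F hF
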